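/- arXiv:2402.14390 — 2 statements merged into one kernel-verified Lean document; each statement's English description precedes it below -/
import Mathlib

section
/- Let p be a positive natural number, Y ∈ (Fin p → ℕ), μ ∈ (Fin p → ℝ), m ∈ (Fin p → ℝ), and let Σ and S be symmetric positive definite real p×p matrices. If the matrix 2·Σ⁻¹ − S⁻¹ is positive definite, then the function v ↦ p_{Σ,μ}(Y, v)² / φ(v; m, S) is Lebesgue-integrable on ℝ^p, i.e. ∫_{ℝ^p} p_{Σ,μ}(Y, v)² / φ(v; m, S) dv < ∞. -/
/-!
Each Poisson factor `exp (Y j * x - exp x) / (Y j)!` is the Poisson probability of `Y j` at rate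
`exp x`, hence at most `1`, so `p_{Σ,μ}(Y, v) ≤ φ(v; 0, Σ)`. The ratio `φ(v; 0, Σ)² / φ(v; m, S)` is
a constant times `exp (-(1/2) vᵀ (2Σ⁻¹ - S⁻¹) v + wᵀ v)`, and since `2Σ⁻¹ - S⁻¹` is positive
definite its spectrum is bounded below by some `c > 0`, so this is dominated by the integrable
product of one-dimensional Gaussians `exp (-(c/2) vᵀ v + wᵀ v)`.
-/

open MeasureTheory Real Matrix

/-- Joint density of the Poisson log-normal model: observed counts `Y` and
latent vector `v`, with latent covariance `Sig` and linear predictor `μ`. -/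
noncomputable def plnDensity (p : ℕ) (Sig : Matrix (Fin p) (Fin p) ℝ)
    (μ : Fin p → ℝ) (Y : Fin p → ℕ) (v : Fin p → ℝ) : ℝ :=
  (2 * Real.pi) ^ (-(p : ℝ) / 2) * Sig.det ^ (-(1 : ℝ) / 2) *
    Real.exp (-(1 / 2) * (v ⬝ᵥ Sig⁻¹.mulVec v)) *
    ∏ j, Real.exp ((Y j : ℝ) * (μ j + v j) - Real.exp (μ j + v j)) /
      (Nat.factorial (Y j) : ℝ)

/-- Gaussian density on `ℝ^p` with mean `m` and covariance `S`. -/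
noncomputable def gaussDensity (p : ℕ) (m : Fin p → ℝ)
    (S : Matrix (Fin p) (Fin p) ℝ) (v : Fin p → ℝ) : ℝ :=
  (2 * Real.pi) ^ (-(p : ℝ) / 2) * S.det ^ (-(1 : ℝ) / 2) *
    Real.exp (-(1 / 2) * ((v - m) ⬝ᵥ S⁻¹.mulVec (v - m)))

theorem Real.exp_nat_mul_sub_exp_div_factorial_le_one (k : ℕ) (x : ℝ) :
    exp (k * x - exp x) / k.factorial ≤ 1 :=
  calc exp (k * x - exp x) / k.factorial = exp x ^ k / k.factorial * exp (-exp x) := by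
        rw [← exp_nat_mul, div_mul_eq_mul_div, ← exp_add, sub_eq_add_neg]
    _ ≤ exp (exp x) * exp (-exp x) := by
        gcongr
        exact pow_div_factorial_le_exp _ (exp_pos x).le k
    _ = 1 := by rw [← exp_add, add_neg_cancel, exp_zero]

theorem Matrix.sub_dotProduct_mulVec_sub {n R : Type*} [Fintype n] [CommRing R]
    (M : Matrix n n R) (v m : n → R) :
    (v - m) ⬝ᵥ M *ᵥ (v - m) = v ⬝ᵥ M *ᵥ v - (M *ᵥ m + m ᵥ* M) ⬝ᵥ v + m ⬝ᵥ M *ᵥ m := by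
  rw [mulVec_sub, sub_dotProduct, dotProduct_sub, dotProduct_sub, add_dotProduct,
    dotProduct_comm (M *ᵥ m), ← dotProduct_mulVec]
  ring

theorem continuous_dotProduct_mulVec_self {n R : Type*} [Fintype n] [Semiring R]
    [TopologicalSpace R] [IsTopologicalSemiring R] (M : Matrix n n R) :
    Continuous fun v : n → R => v ⬝ᵥ M *ᵥ v :=
  continuous_id.dotProduct (continuous_const.matrix_mulVec continuous_id)

section PosDef

variable {n : Type*} [Fintype n] {A : Matrix n n ℝ}

open scoped MatrixOrder in
theorem Matrix.PosDef.exists_pos_mul_dotProduct_self_le (hA : A.PosDef) :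
    ∃ c > 0, ∀ v : n → ℝ, c * (v ⬝ᵥ v) ≤ v ⬝ᵥ A *ᵥ v := by
  classical
  cases isEmpty_or_nonempty n
  · exact ⟨1, one_pos, fun v => by simp [dotProduct]⟩
  obtain ⟨c, hc, hcA⟩ : ∃ c > 0, algebraMap ℝ (Matrix n n ℝ) c ≤ A :=
    (CFC.exists_pos_algebraMap_le_iff hA.isHermitian.isSelfAdjoint).2
      fun _ hx => hA.isStrictlyPositive.spectrum_pos hx
  refine ⟨c, hc, fun v => ?_⟩
  have := (Matrix.le_iff.1 hcA).dotProduct_mulVec_nonneg v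
  rw [Algebra.algebraMap_eq_smul_one, sub_mulVec, smul_mulVec, one_mulVec, dotProduct_sub,
    dotProduct_smul, smul_eq_mul] at this
  simpa using this

theorem Matrix.PosDef.integrable_exp_neg_half_dotProduct_mulVec_add (hA : A.PosDef)
    (w : n → ℝ) : Integrable fun v : n → ℝ => exp (-(1 / 2) * (v ⬝ᵥ A *ᵥ v) + w ⬝ᵥ v) := by
  obtain ⟨c, hc, hcA⟩ := hA.exists_pos_mul_dotProduct_self_le
  have hdom : Integrable fun v : n → ℝ => exp (-(c / 2) * (v ⬝ᵥ v) + w ⬝ᵥ v) := by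
    have := (GaussianFourier.integrable_cexp_neg_mul_sum_add (b := (c / 2 : ℝ))
      (by simpa using hc) (fun i => (w i : ℂ))).norm
    simp only [Complex.norm_exp] at this
    convert this using 3 with v
    simp [dotProduct, sq]
  refine hdom.mono' ?_ (ae_of_all _ fun v => ?_)
  · exact (continuous_exp.comp ((continuous_const.mul (continuous_dotProduct_mulVec_self A)).add
      (continuous_const.dotProduct continuous_id))).aestronglyMeasurable
  · rw [norm_of_nonneg (exp_pos _).le]
    exact exp_le_exp.2 (by linarith [hcA v])

end PosDef

theorem continuous_gaussDensity (p : ℕ) (m : Fin p → ℝ) (S : Matrix (Fin p) (Fin p) ℝ) :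
    Continuous (gaussDensity p m S) := by
  unfold gaussDensity
  have := (continuous_dotProduct_mulVec_self S⁻¹).comp (continuous_sub_right m)
  fun_prop

theorem integrable_gaussDensity_sq_div_gaussDensity {p : ℕ} {Sig S : Matrix (Fin p) (Fin p) ℝ}
    (m : Fin p → ℝ) (hA : ((2 : ℝ) • Sig⁻¹ - S⁻¹).PosDef) :
    Integrable fun v => gaussDensity p 0 Sig v ^ 2 / gaussDensity p m S v := by
  set K : ℝ := ((2 * π) ^ (-(p : ℝ) / 2) * Sig.det ^ (-(1 : ℝ) / 2)) ^ 2 /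
    ((2 * π) ^ (-(p : ℝ) / 2) * S.det ^ (-(1 : ℝ) / 2)) * exp ((1 / 2) * (m ⬝ᵥ S⁻¹ *ᵥ m))
  set w : Fin p → ℝ := (-(1 / 2) : ℝ) • (S⁻¹ *ᵥ m + m ᵥ* S⁻¹)
  have hratio : ∀ v, gaussDensity p 0 Sig v ^ 2 / gaussDensity p m S v =
      K * exp (-(1 / 2) * (v ⬝ᵥ ((2 : ℝ) • Sig⁻¹ - S⁻¹) *ᵥ v) + w ⬝ᵥ v) := by
    intro v
    have hexp : -(1 / 2) * (v ⬝ᵥ ((2 : ℝ) • Sig⁻¹ - S⁻¹) *ᵥ v) + w ⬝ᵥ v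
        + (1 / 2) * (m ⬝ᵥ S⁻¹ *ᵥ m) = 2 * (-(1 / 2) * (v ⬝ᵥ Sig⁻¹ *ᵥ v))
          - (-(1 / 2) * ((v - m) ⬝ᵥ S⁻¹ *ᵥ (v - m))) := by
      rw [sub_dotProduct_mulVec_sub, sub_mulVec, smul_mulVec, dotProduct_sub, dotProduct_smul,
        smul_dotProduct, smul_eq_mul, smul_eq_mul]
      ring
    rw [eq_sub_of_add_eq hexp, exp_sub, exp_sub, two_mul, exp_add]
    simp only [gaussDensity, sub_zero, K]
    field_simp
  simpa only [hratio] using (hA.integrable_exp_neg_half_dotProduct_mulVec_add w).const_mul K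

theorem plnDensity_eq_gaussDensity_mul (p : ℕ) (Sig : Matrix (Fin p) (Fin p) ℝ) (μ : Fin p → ℝ)
    (Y : Fin p → ℕ) (v : Fin p → ℝ) :
    plnDensity p Sig μ Y v = gaussDensity p 0 Sig v *
      ∏ j, exp (Y j * (μ j + v j) - exp (μ j + v j)) / (Y j).factorial := by
  simp only [plnDensity, gaussDensity, sub_zero]

theorem continuous_plnDensity (p : ℕ) (Sig : Matrix (Fin p) (Fin p) ℝ) (μ : Fin p → ℝ)
    (Y : Fin p → ℕ) : Continuous (plnDensity p Sig μ Y) := by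
  unfold plnDensity
  have := continuous_dotProduct_mulVec_self Sig⁻¹
  fun_prop

theorem pln_is_weights_finite_variance_general (p : ℕ)
    (Y : Fin p → ℕ) (μ : Fin p → ℝ) (m : Fin p → ℝ)
    (Sig S : Matrix (Fin p) (Fin p) ℝ)
    (hcond : ((2 : ℝ) • Sig⁻¹ - S⁻¹).PosDef) :
    Integrable (fun v : Fin p → ℝ =>
      (plnDensity p Sig μ Y v) ^ 2 / gaussDensity p m S v) volume := by
  refine (integrable_gaussDensity_sq_div_gaussDensity m hcond).mono ?_ (ae_of_all _ fun v => ?_)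
  · exact (((continuous_plnDensity p Sig μ Y).measurable.pow_const 2).div
      (continuous_gaussDensity p m S).measurable).aestronglyMeasurable
  rw [plnDensity_eq_gaussDensity_mul, mul_pow, mul_div_right_comm, norm_mul]
  set P := ∏ j, exp (Y j * (μ j + v j) - exp (μ j + v j)) / (Y j).factorial
  have hP0 : 0 ≤ P := by positivity
  have hP1 : P ≤ 1 := Finset.prod_le_one (fun _ _ => by positivity)
    fun j _ => exp_nat_mul_sub_exp_div_factorial_le_one _ _
  refine mul_le_of_le_one_right (norm_nonneg _) ?_
  rw [norm_pow, norm_of_nonneg hP0]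
  exact pow_le_one₀ hP0 hP1

theorem pln_is_weights_finite_variance (p : ℕ) (hp : 0 < p)
    (Y : Fin p → ℕ) (μ : Fin p → ℝ) (m : Fin p → ℝ)
    (Sig S : Matrix (Fin p) (Fin p) ℝ)
    (hSig : Sig.PosDef) (hS : S.PosDef)
    (hcond : ((2 : ℝ) • Sig⁻¹ - S⁻¹).PosDef) :
    Integrable (fun v : Fin p → ℝ =>
      (plnDensity p Sig μ Y v) ^ 2 / gaussDensity p m S v) volume :=
  pln_is_weights_finite_variance_general p Y μ m Sig S hcond
end

section
/- Let p be a positive natural number, Y ∈ (Fin p → ℕ), μ ∈ (Fin p → ℝ), m ∈ (Fin p → ℝ), and let Σ and S be symmetric positive definite real p×p matrices. If the matrix Σ⁻¹ − S⁻¹ is positive definite, then sup_{v ∈ ℝ^p} p_{Σ,μ}(Y, v) / φ(v; m, S) < ∞, i.e. the function v ↦ p_{Σ,μ}(Y, v) / φ(v; m, S) is bounded above on ℝ^p. -/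
open MeasureTheory Real Matrix

/-! Dropping the factors `exp (-exp (μⱼ + vⱼ))` and the factorials bounds the weight by a
constant times the exponential of a quadratic in `v` with Hessian `-(Σ⁻¹ - S⁻¹)`. When
`Σ⁻¹ - S⁻¹` is positive definite, completing the square bounds that quadratic above. -/

open scoped Nat

namespace Matrix

variable {n R : Type*}

lemma IsSymm.dotProduct_mulVec_comm [Fintype n] [CommSemiring R] {A : Matrix n n R}
    (hA : A.IsSymm) (x y : n → R) : x ⬝ᵥ A *ᵥ y = y ⬝ᵥ A *ᵥ x := by
  rw [dotProduct_mulVec, ← mulVec_transpose, hA.eq, dotProduct_comm]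

lemma IsSymm.dotProduct_sub_mulVec_sub [Fintype n] [CommRing R] {A : Matrix n n R}
    (hA : A.IsSymm) (x y : n → R) :
    (x - y) ⬝ᵥ A *ᵥ (x - y) = x ⬝ᵥ A *ᵥ x - 2 * (x ⬝ᵥ A *ᵥ y) + y ⬝ᵥ A *ᵥ y := by
  rw [mulVec_sub, dotProduct_sub, sub_dotProduct, sub_dotProduct, hA.dotProduct_mulVec_comm y x]
  ring

lemma IsSymm.neg_half_quad_add_linear_add_half_quad_sub_eq [Fintype n]
    {P Q : Matrix n n ℝ} (hQ : Q.IsSymm) (y μ m v : n → ℝ) :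
    -(1 / 2) * (v ⬝ᵥ P *ᵥ v) + y ⬝ᵥ (μ + v) + 1 / 2 * ((v - m) ⬝ᵥ Q *ᵥ (v - m)) =
      -(1 / 2) * (v ⬝ᵥ (P - Q) *ᵥ v) + v ⬝ᵥ (y - Q *ᵥ m) +
        (y ⬝ᵥ μ + 1 / 2 * (m ⬝ᵥ Q *ᵥ m)) := by
  rw [hQ.dotProduct_sub_mulVec_sub, sub_mulVec, dotProduct_sub, dotProduct_add, dotProduct_sub,
    dotProduct_comm y v]
  ring

lemma PosDef.neg_half_dotProduct_mulVec_add_dotProduct_le [Fintype n] [DecidableEq n]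
    {A : Matrix n n ℝ} (hA : A.PosDef) (b x : n → ℝ) :
    -(1 / 2) * (x ⬝ᵥ A *ᵥ x) + x ⬝ᵥ b ≤ 1 / 2 * (b ⬝ᵥ A⁻¹ *ᵥ b) := by
  set u := A⁻¹ *ᵥ b
  have hAu : A *ᵥ u = b := by
    rw [mulVec_mulVec, mul_nonsing_inv _ (isUnit_iff_ne_zero.2 hA.det_pos.ne'), one_mulVec]
  have h := hA.posSemidef.dotProduct_mulVec_nonneg (x - u)
  rw [star_trivial, (isHermitian_iff_isSymm.1 hA.isHermitian).dotProduct_sub_mulVec_sub, hAu,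
    dotProduct_comm u b] at h
  linarith

end Matrix

lemma exp_mul_sub_exp_div_factorial_le (k : ℕ) (t : ℝ) :
    exp (k * t - exp t) / k ! ≤ exp (k * t) := by
  refine div_le_of_le_mul₀ (by positivity) (exp_pos _).le ?_
  calc exp (k * t - exp t) ≤ exp (k * t) := exp_le_exp.2 (by linarith [exp_pos t])
    _ ≤ exp (k * t) * k ! :=
      le_mul_of_one_le_right (exp_pos _).le (by exact_mod_cast k.factorial_pos)

lemma plnDensity_le {p : ℕ} {Sig : Matrix (Fin p) (Fin p) ℝ} (hSig : Sig.PosDef)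
    (μ : Fin p → ℝ) (Y : Fin p → ℕ) (v : Fin p → ℝ) :
    plnDensity p Sig μ Y v ≤ (2 * π) ^ (-(p : ℝ) / 2) * Sig.det ^ (-(1 : ℝ) / 2) *
      exp (-(1 / 2) * (v ⬝ᵥ Sig⁻¹ *ᵥ v) + (fun j => (Y j : ℝ)) ⬝ᵥ (μ + v)) := by
  have hprod : ∏ j, exp ((Y j : ℝ) * (μ j + v j) - exp (μ j + v j)) / (Y j)!
      ≤ exp ((fun j => (Y j : ℝ)) ⬝ᵥ (μ + v)) := by
    rw [dotProduct, exp_sum]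
    exact Finset.prod_le_prod (fun j _ => by positivity)
      (fun j _ => exp_mul_sub_exp_div_factorial_le (Y j) (μ j + v j))
  have hdet := hSig.det_pos
  rw [plnDensity, exp_add, ← mul_assoc]
  gcongr

lemma gaussDensity_pos {p : ℕ} {S : Matrix (Fin p) (Fin p) ℝ} (hS : S.PosDef)
    (m v : Fin p → ℝ) : 0 < gaussDensity p m S v := by
  have := hS.det_pos
  unfold gaussDensity
  positivity

lemma plnDensity_div_gaussDensity_le {p : ℕ} {Sig S : Matrix (Fin p) (Fin p) ℝ}
    (hSig : Sig.PosDef) (hS : S.PosDef) (μ m : Fin p → ℝ) (Y : Fin p → ℕ) (v : Fin p → ℝ) :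
    plnDensity p Sig μ Y v / gaussDensity p m S v ≤
      Sig.det ^ (-(1 : ℝ) / 2) / S.det ^ (-(1 : ℝ) / 2) *
        exp (-(1 / 2) * (v ⬝ᵥ Sig⁻¹ *ᵥ v) + (fun j => (Y j : ℝ)) ⬝ᵥ (μ + v) +
          1 / 2 * ((v - m) ⬝ᵥ S⁻¹ *ᵥ (v - m))) := by
  have hdet := hS.det_pos
  calc plnDensity p Sig μ Y v / gaussDensity p m S v
      ≤ (2 * π) ^ (-(p : ℝ) / 2) * Sig.det ^ (-(1 : ℝ) / 2) *
          exp (-(1 / 2) * (v ⬝ᵥ Sig⁻¹ *ᵥ v) + (fun j => (Y j : ℝ)) ⬝ᵥ (μ + v)) /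
          gaussDensity p m S v :=
        div_le_div_of_nonneg_right (plnDensity_le hSig μ Y v) (gaussDensity_pos hS m v).le
    _ = _ := by
        rw [gaussDensity, exp_add _ (1 / 2 * _), ← neg_neg (1 / 2 * _), exp_neg, neg_mul]
        field_simp

theorem pln_is_weights_bounded_general (p : ℕ)
    (Y : Fin p → ℕ) (μ : Fin p → ℝ) (m : Fin p → ℝ)
    (Sig S : Matrix (Fin p) (Fin p) ℝ)
    (hSig : Sig.PosDef) (hS : S.PosDef)
    (hcond : (Sig⁻¹ - S⁻¹).PosDef) :
    BddAbove (Set.range fun v : Fin p → ℝ =>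
      plnDensity p Sig μ Y v / gaussDensity p m S v) := by
  set y : Fin p → ℝ := fun j => (Y j : ℝ)
  set b := y - S⁻¹ *ᵥ m
  have hSinv : S⁻¹.IsSymm := isHermitian_iff_isSymm.1 hS.inv.isHermitian
  refine ⟨Sig.det ^ (-(1 : ℝ) / 2) / S.det ^ (-(1 : ℝ) / 2) *
    exp (1 / 2 * (b ⬝ᵥ (Sig⁻¹ - S⁻¹)⁻¹ *ᵥ b) + (y ⬝ᵥ μ + 1 / 2 * (m ⬝ᵥ S⁻¹ *ᵥ m))), ?_⟩
  rintro _ ⟨v, rfl⟩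
  have hdetSig := hSig.det_pos
  have hdetS := hS.det_pos
  refine (plnDensity_div_gaussDensity_le hSig hS μ m Y v).trans ?_
  rw [hSinv.neg_half_quad_add_linear_add_half_quad_sub_eq]
  gcongr
  exact hcond.neg_half_dotProduct_mulVec_add_dotProduct_le b v

theorem pln_is_weights_bounded (p : ℕ) (hp : 0 < p)
    (Y : Fin p → ℕ) (μ : Fin p → ℝ) (m : Fin p → ℝ)
    (Sig S : Matrix (Fin p) (Fin p) ℝ)
    (hSig : Sig.PosDef) (hS : S.PosDef)
    (hcond : (Sig⁻¹ - S⁻¹).PosDef) :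
    BddAbove (Set.range fun v : Fin p → ℝ =>
      plnDensity p Sig μ Y v / gaussDensity p m S v) :=
  pln_is_weights_bounded_general p Y μ m Sig S hSig hS hcond
end
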